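/- arXiv:2303.08476 — 3 statements merged into one kernel-verified Lean document; each statement's English description precedes it below -/
import Mathlib

section
/- Let 0 < t̲⁰ ≤ t̄⁰, λ̲⁰ > 0, t > 0 and n ≥ 0 real. Then the minimum of (t⁰·λ̲⁰ + n)/(t⁰ + t) over t⁰ ∈ [t̲⁰, t̄⁰] equals (t̄⁰·λ̲⁰ + n)/(t̄⁰ + t) if n/t ≥ λ̲⁰, and equals (t̲⁰·λ̲⁰ + n)/(t̲⁰ + t) otherwise. -/
theorem ipsp_lower_bound (tl tu lam0 t n : ℝ)
    (htl : 0 < tl) (htlu : tl ≤ tu) (hlam0 : 0 < lam0) (ht : 0 < t) (hn : 0 ≤ n) :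
    IsLeast ((fun t0 : ℝ => (t0 * lam0 + n) / (t0 + t)) '' Set.Icc tl tu)
      (if lam0 ≤ n / t then (tu * lam0 + n) / (tu + t)
       else (tl * lam0 + n) / (tl + t)) := by
  have htu : 0 < tu := lt_of_lt_of_le htl htlu
  split_ifs with h
  · have h' : lam0 * t ≤ n := by rw [le_div_iff₀ ht] at h; linarith
    refine ⟨⟨tu, ⟨htlu, le_refl _⟩, rfl⟩, ?_⟩
    rintro y ⟨x, ⟨hx1, hx2⟩, rfl⟩
    have hx : 0 < x := lt_of_lt_of_le htl hx1
    rw [div_le_div_iff₀ (by linarith) (by linarith)]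
    nlinarith [mul_nonneg (sub_nonneg.mpr hx2) (sub_nonneg.mpr h')]
  · have h' : n ≤ lam0 * t := by
      have := not_le.mp h
      rw [div_lt_iff₀ ht] at this; linarith
    refine ⟨⟨tl, ⟨le_refl _, htlu⟩, rfl⟩, ?_⟩
    rintro y ⟨x, ⟨hx1, hx2⟩, rfl⟩
    have hx : 0 < x := lt_of_lt_of_le htl hx1
    rw [div_le_div_iff₀ (by linarith) (by linarith)]
    nlinarith [mul_nonneg (sub_nonneg.mpr hx1) (sub_nonneg.mpr h')]
end

section
/- Let 0 < t̲⁰ ≤ t̄⁰, λ̄⁰ > 0, t > 0 and n ≥ 0 real. Then the maximum of (t⁰·λ̄⁰ + n)/(t⁰ + t) over t⁰ ∈ [t̲⁰, t̄⁰] equals (t̄⁰·λ̄⁰ + n)/(t̄⁰ + t) if n/t ≤ λ̄⁰, and equals (t̲⁰·λ̄⁰ + n)/(t̲⁰ + t) otherwise. -/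
theorem ipsp_upper_bound (tl tu lam0 t n : ℝ)
    (htl : 0 < tl) (htlu : tl ≤ tu) (hlam0 : 0 < lam0) (ht : 0 < t) (hn : 0 ≤ n) :
    IsGreatest ((fun t0 : ℝ => (t0 * lam0 + n) / (t0 + t)) '' Set.Icc tl tu)
      (if n / t ≤ lam0 then (tu * lam0 + n) / (tu + t)
       else (tl * lam0 + n) / (tl + t)) := by
  have htu : 0 < tu := lt_of_lt_of_le htl htlu
  split_ifs with h
  · constructor
    · exact ⟨tu, ⟨htlu, le_refl _⟩, rfl⟩
    · rintro y ⟨x, ⟨hx1, hx2⟩, rfl⟩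
      have hx : 0 < x := lt_of_lt_of_le htl hx1
      have hnt : n ≤ lam0 * t := by
        rw [div_le_iff₀ ht] at h; linarith
      rw [div_le_div_iff₀ (by linarith) (by linarith)]
      nlinarith [mul_nonneg (sub_nonneg.2 hx2) (sub_nonneg.2 hnt)]
  · constructor
    · exact ⟨tl, ⟨le_refl _, htlu⟩, rfl⟩
    · rintro y ⟨x, ⟨hx1, hx2⟩, rfl⟩
      have hx : 0 < x := lt_of_lt_of_le htl hx1
      have hnt : lam0 * t ≤ n := by
        push_neg at h; rw [lt_div_iff₀ ht] at h; linarith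
      rw [div_le_div_iff₀ (by linarith) (by linarith)]
      nlinarith [mul_nonneg (sub_nonneg.2 hx1) (sub_nonneg.2 hnt)]
end

section
/- Let 0 < t̲⁰ ≤ t̄⁰ and 0 < λ̲⁰ ≤ λ̄⁰, t > 0, n ≥ 0. For all (t⁰, λ⁰) ∈ [t̲⁰, t̄⁰] × [λ̲⁰, λ̄⁰], the posterior rate (t⁰λ⁰+n)/(t⁰+t) lies in the interval [λ̲^{(t)}, λ̄^{(t)}], where λ̲^{(t)} and λ̄^{(t)} are the case-defined IPSP bounds of Theorem 2. -/
theorem ipsp_posterior_in_bounds (tl tu laml lamu t n : ℝ)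
    (htl : 0 < tl) (htlu : tl ≤ tu) (hlaml : 0 < laml) (hlamlu : laml ≤ lamu)
    (ht : 0 < t) (hn : 0 ≤ n) :
    ∀ t0 ∈ Set.Icc tl tu, ∀ lam0 ∈ Set.Icc laml lamu,
      (t0 * lam0 + n) / (t0 + t) ∈ Set.Icc
        (if laml ≤ n / t then (tu * laml + n) / (tu + t)
         else (tl * laml + n) / (tl + t))
        (if n / t ≤ lamu then (tu * lamu + n) / (tu + t)
         else (tl * lamu + n) / (tl + t)) := by
  intro t0 ht0 lam0 hlam0
  obtain ⟨h1, h2⟩ := ht0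
  obtain ⟨h3, h4⟩ := hlam0
  have ht0p : 0 < t0 := lt_of_lt_of_le htl h1
  have htup : 0 < tu + t := by linarith
  have htlp : 0 < tl + t := by linarith
  have ht0t : 0 < t0 + t := by linarith
  constructor
  · split_ifs with h
    · rw [div_le_div_iff₀ htup ht0t]
      rw [le_div_iff₀ ht] at h
      nlinarith [mul_nonneg (sub_nonneg.2 h2) (sub_nonneg.2 h), mul_nonneg (mul_nonneg ht0p.le htup.le) (sub_nonneg.2 h3), mul_nonneg ht.le (mul_nonneg ht0p.le (sub_nonneg.2 h3))]
    · push_neg at h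
      rw [div_le_div_iff₀ htlp ht0t]
      rw [div_lt_iff₀ ht] at h
      nlinarith [mul_nonneg (sub_nonneg.2 h1) (sub_nonneg.2 h.le), mul_nonneg (mul_nonneg ht0p.le htlp.le) (sub_nonneg.2 h3), mul_nonneg ht.le (mul_nonneg ht0p.le (sub_nonneg.2 h3))]
  · split_ifs with h
    · rw [div_le_div_iff₀ ht0t htup]
      rw [div_le_iff₀ ht] at h
      nlinarith [mul_nonneg (sub_nonneg.2 h2) (sub_nonneg.2 h), mul_nonneg (mul_nonneg ht0p.le htup.le) (sub_nonneg.2 h4), mul_nonneg ht.le (mul_nonneg ht0p.le (sub_nonneg.2 h4))]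
    · push_neg at h
      rw [div_le_div_iff₀ ht0t htlp]
      rw [lt_div_iff₀ ht] at h
      nlinarith [mul_nonneg (sub_nonneg.2 h1) (sub_nonneg.2 h.le), mul_nonneg (mul_nonneg ht0p.le htlp.le) (sub_nonneg.2 h4), mul_nonneg ht.le (mul_nonneg ht0p.le (sub_nonneg.2 h4))]
end
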